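/- arXiv:1904.12514 — 5 statements merged into one kernel-verified Lean document; each statement's English description precedes it below -/
import Mathlib

section
/- Let T be a left-continuous triangular norm on [0,1] (commutative, associative, monotone in each variable, with neutral element 1). Then the binary operation on Δ⁺ defined by (F ⋆_T L)(t) := sup_{s+u=t} T(F(s), L(u)) is a triangle function: it maps Δ⁺ × Δ⁺ to Δ⁺, is commutative, associative, nondecreasing in each argument, and has H₀ as neutral element. -/
open Filter Topology

noncomputable section

/-- `Δ⁺`: distribution functions `F : [-∞,∞] → [0,1]`, nondecreasing, left-continuous
on `ℝ`, with `F(-∞)=0`, `F(+∞)=1` and `F(0)=0`. -/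
def IsDistFun (F : EReal → ℝ) : Prop :=
  Monotone F ∧ (∀ t, F t ∈ Set.Icc (0:ℝ) 1) ∧
  (∀ x : ℝ, ContinuousWithinAt F (Set.Iio (x : EReal)) (x : EReal)) ∧
  F ⊥ = 0 ∧ F ⊤ = 1 ∧ F (0 : EReal) = 0

/-- The step function `H_a`. -/
def Hstep (a : ℝ) : EReal → ℝ := fun t => if t ≤ (a : EReal) then 0 else 1

/-- `H₀`. -/
def H0 : EReal → ℝ := Hstep 0

/-- `H_∞`. -/
def Hinf : EReal → ℝ := fun t => if t = ⊤ then 1 else 0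

/-- The condition `A(F,G;h)` : for all `t ∈ (0,1/h)`, `G(t) ≤ F(t+h)+h`. -/
def levyCond (F G : EReal → ℝ) (h : ℝ) : Prop :=
  ∀ t : ℝ, 0 < t → t < 1 / h → G (t : EReal) ≤ F ((t + h : ℝ) : EReal) + h

def levySet (F G : EReal → ℝ) : Set ℝ :=
  {h : ℝ | 0 < h ∧ h ≤ 1 ∧ levyCond F G h ∧ levyCond G F h}

/-- The modified Lévy distance. -/
def dL (F G : EReal → ℝ) : ℝ := sInf (levySet F G)

/-- Weak convergence: pointwise convergence at each (real) continuity point of the limit. -/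
def WeakConv (F : ℕ → EReal → ℝ) (G : EReal → ℝ) : Prop :=
  ∀ t : ℝ, ContinuousAt G (t : EReal) →
    Tendsto (fun n => F n (t : EReal)) atTop (𝓝 (G (t : EReal)))

abbrev TriOp := (EReal → ℝ) → (EReal → ℝ) → (EReal → ℝ)

/-- A triangle function on `Δ⁺`. -/
def IsTriangleFn (star : TriOp) : Prop :=
  (∀ F L, IsDistFun F → IsDistFun L → IsDistFun (star F L)) ∧
  (∀ F L, IsDistFun F → IsDistFun L → star F L = star L F) ∧
  (∀ F L K, IsDistFun F → IsDistFun L → IsDistFun K →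
    star F (star L K) = star (star F L) K) ∧
  (∀ F, IsDistFun F → star F H0 = F) ∧
  (∀ F L K, IsDistFun F → IsDistFun L → IsDistFun K → F ≤ L → star F K ≤ star L K)

/-- `⋆` is continuous with respect to weak convergence. -/
def StarContinuous (star : TriOp) : Prop :=
  ∀ (Fn Ln : ℕ → EReal → ℝ) (F L : EReal → ℝ),
    (∀ n, IsDistFun (Fn n)) → (∀ n, IsDistFun (Ln n)) →
    IsDistFun F → IsDistFun L →
    WeakConv Fn F → WeakConv Ln L →
    WeakConv (fun n => star (Fn n) (Ln n)) (star F L)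

/-- `⋆` is sup-continuous. -/
def StarSupContinuous (star : TriOp) : Prop :=
  ∀ (I : Type) (_ : Nonempty I) (F : I → EReal → ℝ) (L : EReal → ℝ),
    (∀ i, IsDistFun (F i)) → IsDistFun L →
    (fun t => ⨆ i, star (F i) L t) = star (fun t => ⨆ i, F i t) L

/-- A probabilistic metric space `(G, D, ⋆)`. -/
structure PMSpace (G : Type) where
  star : TriOp
  D : G → G → EReal → ℝ
  star_tri : IsTriangleFn star
  D_mem : ∀ p q, IsDistFun (D p q)
  D_eq_iff : ∀ p q, D p q = H0 ↔ p = q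
  D_symm : ∀ p q, D p q = D q p
  D_tri : ∀ p q r, star (D p q) (D q r) ≤ D p r

/-- Probabilistic 1-Lipschitz map. -/
def PLip {G : Type} (M : PMSpace G) (f : G → EReal → ℝ) : Prop :=
  (∀ x, IsDistFun (f x)) ∧ ∀ x y, M.star (M.D x y) (f y) ≤ f x

/-- Probabilistically continuous map. -/
def PCont {G : Type} (M : PMSpace G) (f : G → EReal → ℝ) : Prop :=
  (∀ x, IsDistFun (f x)) ∧
  ∀ (z : G) (zn : ℕ → G),
    WeakConv (fun n => M.D (zn n) z) H0 →
    WeakConv (fun n => f (zn n)) (f z)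

/-- The uniform modified Lévy distance `d_∞`. -/
def dInf {G : Type} (f g : G → EReal → ℝ) : ℝ := ⨆ x, dL (f x) (g x)

/-- Probabilistic Cauchy sequence: `D(z_n,z_p)(t) → H₀(t)` for all real `t`. -/
def PCauchy {G : Type} (M : PMSpace G) (z : ℕ → G) : Prop :=
  ∀ t : ℝ, Tendsto (fun np : ℕ × ℕ => M.D (z np.1) (z np.2) (t : EReal))
    atTop (𝓝 (H0 (t : EReal)))

def PConvTo {G : Type} (M : PMSpace G) (z : ℕ → G) (w : G) : Prop :=
  ∀ t : ℝ, Tendsto (fun n => M.D (z n) w (t : EReal)) atTop (𝓝 (H0 (t : EReal)))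

def PComplete {G : Type} (M : PMSpace G) : Prop :=
  ∀ z : ℕ → G, PCauchy M z → ∃ w, PConvTo M z w

/-- Compactness: complete and every strong `t`-neighborhood cover has a finite subcover. -/
def PCompact {G : Type} (M : PMSpace G) : Prop :=
  PComplete M ∧ ∀ t : ℝ, 0 < t → ∃ A : Finset G, ∀ x : G, ∃ a ∈ A, M.D a x (t : EReal) > 1 - t

/-- A triangular norm on `[0,1]`. -/
def IsTNorm (T : ℝ → ℝ → ℝ) : Prop :=
  (∀ x ∈ Set.Icc (0:ℝ) 1, ∀ y ∈ Set.Icc (0:ℝ) 1, T x y ∈ Set.Icc (0:ℝ) 1) ∧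
  (∀ x y, T x y = T y x) ∧
  (∀ x y z, T x (T y z) = T (T x y) z) ∧
  (∀ x y z, y ≤ z → T x y ≤ T x z) ∧
  (∀ x, T x 1 = x)

/-- Left-continuity of `T`. -/
def LeftContTNorm (T : ℝ → ℝ → ℝ) : Prop :=
  ∀ x y : ℝ, ContinuousWithinAt (fun p : ℝ × ℝ => T p.1 p.2)
    (Set.Iio x ×ˢ Set.Iio y) (x, y)

/-- `(F ⋆_T L)(t) = sup_{s+u=t} T(F(s), L(u))`. -/
def starT (T : ℝ → ℝ → ℝ) : TriOp := fun F L t =>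
  sSup {r : ℝ | ∃ s u : EReal, s + u = t ∧ r = T (F s) (L u)}

/-! Every value `T (F s) (L u)` with `s + u = t` lies in `[0,1]`, so the supremum defining
`F ⋆ L` is an honest one. Left-continuity of `T` means that `T a b` is approached by `T a' b'`
with `a' < a`, `b' < b`. Hence `T a (sup S) = sup (T a '' S)`, so `F ⋆ (L ⋆ K)` and `(F ⋆ L) ⋆ K`
are both the supremum of `T (F s) (T (L v) (K w))` over `s + v + w = t`, and associativity
reduces to that of `T` and `+`. The same approximation, combined with the left-continuity of
`F` and `L`, approaches `(F ⋆ L) t` by values at points `s' + u' < t`, so `F ⋆ L` is again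
left-continuous. -/

open Set

namespace IsTNorm

variable {T : ℝ → ℝ → ℝ} (hT : IsTNorm T)
include hT

theorem mem_Icc {x y : ℝ} (hx : x ∈ Icc (0 : ℝ) 1) (hy : y ∈ Icc (0 : ℝ) 1) :
    T x y ∈ Icc (0 : ℝ) 1 :=
  hT.1 x hx y hy

theorem comm (x y : ℝ) : T x y = T y x := hT.2.1 x y

theorem assoc (x y z : ℝ) : T x (T y z) = T (T x y) z := hT.2.2.1 x y z

theorem mono_right (x : ℝ) {y z : ℝ} (h : y ≤ z) : T x y ≤ T x z := hT.2.2.2.1 x y z h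

theorem mul_one (x : ℝ) : T x 1 = x := hT.2.2.2.2 x

theorem mono_left {x y : ℝ} (h : x ≤ y) (z : ℝ) : T x z ≤ T y z := by
  rw [hT.comm x z, hT.comm y z]
  exact hT.mono_right z h

theorem mono {x x' y y' : ℝ} (hx : x ≤ x') (hy : y ≤ y') : T x y ≤ T x' y' :=
  (hT.mono_left hx y).trans (hT.mono_right x' hy)

theorem zero_mul {x : ℝ} (hx : x ∈ Icc (0 : ℝ) 1) : T 0 x = 0 :=
  le_antisymm ((hT.mono_right 0 hx.2).trans_eq (hT.mul_one 0))
    (hT.mem_Icc (left_mem_Icc.2 zero_le_one) hx).1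

theorem mul_zero {x : ℝ} (hx : x ∈ Icc (0 : ℝ) 1) : T x 0 = 0 := by
  rw [hT.comm, hT.zero_mul hx]

theorem exists_pos_forall_lt_apply (hTl : LeftContTNorm T) {x y r : ℝ} (hr : r < T x y) :
    ∃ δ > 0, ∀ a b, x - δ < a → y - δ < b → r < T a b := by
  obtain ⟨δ, hδ, hball⟩ := Metric.continuousWithinAt_iff.1 (hTl x y) (T x y - r) (by linarith)
  refine ⟨δ / 2, by positivity, fun a b ha hb => ?_⟩
  have hmem : (x - δ / 2, y - δ / 2) ∈ Iio x ×ˢ Iio y := ⟨by simp [hδ], by simp [hδ]⟩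
  have hdist : dist (x - δ / 2, y - δ / 2) (x, y) < δ := by
    simp [Prod.dist_eq, abs_of_pos hδ, hδ]
  have hclose := (abs_lt.1 (Real.dist_eq _ _ ▸ hball hmem hdist)).1
  have := hT.mono ha.le hb.le
  linarith

end IsTNorm

namespace IsDistFun

variable {F : EReal → ℝ} (hF : IsDistFun F)
include hF

theorem mem_Icc (t : EReal) : F t ∈ Icc (0 : ℝ) 1 := hF.2.1 t

theorem le_one (t : EReal) : F t ≤ 1 := (hF.mem_Icc t).2

theorem apply_top : F ⊤ = 1 := hF.2.2.2.2.1

theorem apply_eq_zero_of_nonpos {t : EReal} (ht : t ≤ 0) : F t = 0 :=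
  le_antisymm (hF.2.2.2.2.2 ▸ hF.1 ht) (hF.mem_Icc t).1

theorem exists_lt_of_lt_apply {x : ℝ} {r : ℝ} (hr : r < F x) :
    ∃ s : ℝ, s < x ∧ r < F s := by
  have hc : ContinuousWithinAt (F ∘ ((↑) : ℝ → EReal)) (Iio x) x :=
    (hF.2.2.1 x).comp continuous_coe_real_ereal.continuousWithinAt
      fun _ h => EReal.coe_lt_coe_iff.2 h
  obtain ⟨s, hrs, hsx⟩ := ((hc.eventually (lt_mem_nhds hr)).and self_mem_nhdsWithin).exists
  exact ⟨s, hsx, hrs⟩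

end IsDistFun

theorem Monotone.continuousWithinAt_Iio_of_forall_lt {α β : Type*} [LinearOrder α]
    [TopologicalSpace α] [OrderTopology α] [LinearOrder β] [TopologicalSpace β] [OrderTopology β]
    {G : α → β} (hG : Monotone G) {x : α} (h : ∀ r < G x, ∃ s < x, r < G s) :
    ContinuousWithinAt G (Iio x) x := by
  refine tendsto_order.2 ⟨fun r hr => ?_, fun r hr => ?_⟩
  · obtain ⟨s, hsx, hrs⟩ := h r hr
    filter_upwards [Ioo_mem_nhdsLT hsx] with u hu
    exact hrs.trans_le (hG hu.1.le)
  · filter_upwards [self_mem_nhdsWithin] with u hu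
    exact (hG (le_of_lt hu)).trans_lt hr

theorem H0_of_nonpos {t : EReal} (ht : t ≤ 0) : H0 t = 0 := if_pos (by simpa using ht)

theorem H0_of_pos {t : EReal} (ht : 0 < t) : H0 t = 1 := if_neg (by simpa using ht)

theorem H0_le_one (t : EReal) : H0 t ≤ 1 := by
  unfold H0 Hstep
  split <;> norm_num

theorem EReal.exists_le_add_eq_of_add_le {s u t : EReal} (hs : s ≠ ⊥) (hu : u ≠ ⊥)
    (h : s + u ≤ t) : ∃ s', s ≤ s' ∧ s' + u = t := by
  induction u using EReal.rec with
  | bot => exact absurd rfl hu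
  | top =>
    rw [EReal.add_top_of_ne_bot hs, top_le_iff] at h
    exact ⟨s, le_rfl, by rw [EReal.add_top_of_ne_bot hs, h]⟩
  | coe b =>
    exact ⟨t - b, (EReal.le_sub_iff_add_le (.inl (EReal.coe_ne_bot b))
      (.inl (EReal.coe_ne_top b))).2 h, EReal.sub_add_cancel⟩

theorem EReal.exists_coe_of_add_eq_coe {s u : EReal} {x : ℝ} (h : s + u = x) :
    ∃ a b : ℝ, s = a ∧ u = b ∧ a + b = x := by
  induction s using EReal.rec <;> induction u using EReal.rec <;> simp_all
  exact_mod_cast h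

theorem EReal.nonpos_or_nonpos_of_add_nonpos {s u : EReal} (h : s + u ≤ 0) : s ≤ 0 ∨ u ≤ 0 := by
  by_contra! hpos
  exact (EReal.add_pos hpos.1 hpos.2).not_ge h

section starT

variable {T : ℝ → ℝ → ℝ} {F L K : EReal → ℝ} {t : EReal}

theorem starT_le {c : ℝ} (h : ∀ s u, s + u = t → T (F s) (L u) ≤ c) : starT T F L t ≤ c :=
  csSup_le ⟨_, t, 0, add_zero t, rfl⟩ (by rintro _ ⟨s, u, hsu, rfl⟩; exact h s u hsu)

theorem le_starT (hT : IsTNorm T) (hF : ∀ s, F s ≤ 1) (hL : ∀ u, L u ≤ 1) {s u : EReal}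
    (h : s + u = t) : T (F s) (L u) ≤ starT T F L t := by
  refine le_csSup ⟨1, ?_⟩ ⟨s, u, h, rfl⟩
  rintro _ ⟨s, u, -, rfl⟩
  simpa [hT.mul_one] using hT.mono (hF s) (hL u)

theorem exists_lt_of_lt_starT {r : ℝ} (hr : r < starT T F L t) :
    ∃ s u, s + u = t ∧ r < T (F s) (L u) := by
  by_contra! h
  exact (starT_le h).not_gt hr

theorem starT_comm (hT : IsTNorm T) (F L : EReal → ℝ) : starT T F L = starT T L F := by
  funext t
  unfold starT
  congr 1
  ext r
  constructor <;>
  · rintro ⟨s, u, h, rfl⟩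
    exact ⟨u, s, by rwa [add_comm], hT.comm _ _⟩

theorem starT_mono_left (hT : IsTNorm T) (hL : ∀ s, L s ≤ 1) (hK : ∀ u, K u ≤ 1) (hFL : F ≤ L) :
    starT T F K ≤ starT T L K := fun _ =>
  starT_le fun s _ hsu => (hT.mono_left (hFL s) _).trans (le_starT hT hL hK hsu)

variable (hT : IsTNorm T) (hF : IsDistFun F) (hL : IsDistFun L)
include hT hF hL

theorem starT_nonneg (t : EReal) : 0 ≤ starT T F L t :=
  (hT.mem_Icc (hF.mem_Icc t) (hL.mem_Icc 0)).1.trans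
    (le_starT hT hF.le_one hL.le_one (add_zero t))

theorem starT_mem_Icc (t : EReal) : starT T F L t ∈ Icc (0 : ℝ) 1 :=
  ⟨starT_nonneg hT hF hL t, starT_le fun s u _ => (hT.mem_Icc (hF.mem_Icc s) (hL.mem_Icc u)).2⟩

theorem starT_of_nonpos (ht : t ≤ 0) : starT T F L t = 0 := by
  refine le_antisymm (starT_le fun s u hsu => ?_) (starT_nonneg hT hF hL t)
  rcases EReal.nonpos_or_nonpos_of_add_nonpos (hsu ▸ ht) with hs | hu
  · rw [hF.apply_eq_zero_of_nonpos hs, hT.zero_mul (hL.mem_Icc u)]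
  · rw [hL.apply_eq_zero_of_nonpos hu, hT.mul_zero (hF.mem_Icc s)]

theorem starT_top : starT T F L ⊤ = 1 := by
  refine le_antisymm (starT_mem_Icc hT hF hL ⊤).2 ?_
  have := le_starT hT hF.le_one hL.le_one
    (EReal.top_add_top : (⊤ : EReal) + ⊤ = ⊤)
  rwa [hF.apply_top, hL.apply_top, hT.mul_one] at this

theorem starT_monotone : Monotone (starT T F L) := by
  intro t t' htt'
  refine starT_le fun s u hsu => ?_
  rcases eq_or_ne s ⊥ with rfl | hs
  · rw [hF.apply_eq_zero_of_nonpos bot_le, hT.zero_mul (hL.mem_Icc u)]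
    exact starT_nonneg hT hF hL t'
  rcases eq_or_ne u ⊥ with rfl | hu
  · rw [hL.apply_eq_zero_of_nonpos bot_le, hT.mul_zero (hF.mem_Icc s)]
    exact starT_nonneg hT hF hL t'
  obtain ⟨s', hss', hs'u⟩ := EReal.exists_le_add_eq_of_add_le hs hu (hsu ▸ htt')
  exact (hT.mono_left (hF.1 hss') _).trans
    (le_starT hT hF.le_one hL.le_one hs'u)

theorem starT_continuousWithinAt_Iio (hTl : LeftContTNorm T) (x : ℝ) :
    ContinuousWithinAt (starT T F L) (Iio (x : EReal)) x := by
  refine (starT_monotone hT hF hL).continuousWithinAt_Iio_of_forall_lt fun r hr => ?_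
  obtain ⟨s, u, hsu, hr⟩ := exists_lt_of_lt_starT hr
  obtain ⟨a, b, rfl, rfl, hab⟩ := EReal.exists_coe_of_add_eq_coe hsu
  obtain ⟨δ, hδ, hlt⟩ := hT.exists_pos_forall_lt_apply hTl hr
  obtain ⟨a', ha'a, ha'⟩ := hF.exists_lt_of_lt_apply (sub_lt_self (F a) hδ)
  obtain ⟨b', hb'b, hb'⟩ := hL.exists_lt_of_lt_apply (sub_lt_self (L b) hδ)
  refine ⟨(a' + b' : ℝ), EReal.coe_lt_coe_iff.2 (by linarith), (hlt _ _ ha' hb').trans_le ?_⟩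
  exact le_starT hT hF.le_one hL.le_one (EReal.coe_add _ _).symm

theorem isDistFun_starT (hTl : LeftContTNorm T) : IsDistFun (starT T F L) :=
  ⟨starT_monotone hT hF hL, starT_mem_Icc hT hF hL, starT_continuousWithinAt_Iio hT hF hL hTl,
    starT_of_nonpos hT hF hL bot_le, starT_top hT hF hL, starT_of_nonpos hT hF hL le_rfl⟩

omit hL in
theorem starT_H0 : starT T F H0 = F := by
  funext t
  refine le_antisymm (starT_le fun s u hsu => ?_) (le_of_forall_lt fun r hr => ?_)
  · rcases le_or_gt u 0 with hu | hu
    · rw [H0_of_nonpos hu, hT.mul_zero (hF.mem_Icc s)]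
      exact (hF.mem_Icc t).1
    · rw [H0_of_pos hu, hT.mul_one]
      exact hF.1 (hsu ▸ le_add_of_nonneg_right hu.le)
  obtain ⟨s, u, hsu, hu, hrs⟩ : ∃ s u, s + u = t ∧ 0 < u ∧ r < F s := by
    induction t using EReal.rec with
    | bot => exact ⟨⊥, ⊤, EReal.bot_add ⊤, EReal.zero_lt_top, hr⟩
    | top => exact ⟨⊤, ⊤, EReal.top_add_top, EReal.zero_lt_top, hr⟩
    | coe x =>
      obtain ⟨s, hsx, hrs⟩ := hF.exists_lt_of_lt_apply hr
      exact ⟨s, (x - s : ℝ), by rw [← EReal.coe_add, add_sub_cancel],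
        EReal.coe_pos.2 (sub_pos.2 hsx), hrs⟩
  have := le_starT hT hF.le_one H0_le_one hsu
  rw [H0_of_pos hu, hT.mul_one] at this
  exact hrs.trans_le this

theorem starT_starT_le_iff (hK : IsDistFun K) (hTl : LeftContTNorm T) {c : ℝ} :
    starT T F (starT T L K) t ≤ c ↔
      ∀ s v w, s + (v + w) = t → T (F s) (T (L v) (K w)) ≤ c := by
  have hLK := isDistFun_starT hT hL hK hTl
  constructor
  · intro h s v w hsvw
    calc T (F s) (T (L v) (K w))
        ≤ T (F s) (starT T L K (v + w)) :=
          hT.mono_right _ (le_starT hT hL.le_one hK.le_one rfl)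
      _ ≤ starT T F (starT T L K) t :=
          le_starT hT hF.le_one hLK.le_one hsvw
      _ ≤ c := h
  · refine fun h => starT_le fun s u hsu => le_of_forall_lt fun r hr => ?_
    obtain ⟨δ, hδ, hlt⟩ := hT.exists_pos_forall_lt_apply hTl hr
    obtain ⟨v, w, rfl, hvw⟩ := exists_lt_of_lt_starT (sub_lt_self (starT T L K u) hδ)
    exact (hlt _ _ (sub_lt_self _ hδ) hvw).trans_le (h s v w hsu)

theorem starT_assoc (hK : IsDistFun K) (hTl : LeftContTNorm T) :
    starT T F (starT T L K) = starT T (starT T F L) K := by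
  funext t
  refine eq_of_forall_ge_iff fun c => ?_
  rw [starT_comm hT (starT T F L), starT_starT_le_iff hT hF hL hK hTl,
    starT_starT_le_iff hT hK hF hL hTl]
  refine ⟨fun h w s v hwsv => ?_, fun h s v w hsvw => ?_⟩
  · rw [hT.comm, ← hT.assoc]
    exact h s v w (by rw [← hwsv]; ac_rfl)
  · rw [hT.assoc, ← hT.comm]
    exact h w s v (by rw [← hsvw]; ac_rfl)

end starT

/-- For a left-continuous triangular norm `T`, the operation `⋆_T` is a triangle function. -/
theorem stmt1 (T : ℝ → ℝ → ℝ) (hT : IsTNorm T) (hTl : LeftContTNorm T) :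
    IsTriangleFn (starT T) :=
  ⟨fun _ _ hF hL => isDistFun_starT hT hF hL hTl,
    fun F L _ _ => starT_comm hT F L,
    fun _ _ _ hF hL hK => starT_assoc hT hF hL hK hTl,
    fun _ hF => starT_H0 hT hF,
    fun _ _ _ _ hL hK hFL => starT_mono_left hT hL.le_one hK.le_one hFL⟩
end
end

section
/- The metric space (Δ⁺, d_L), where d_L is the modified Lévy distance, is compact. -/
open Filter Topology

noncomputable section

/-- Left-continuous regularization of `g : ℚ → ℝ`. -/
def Greg (g : ℚ → ℝ) : EReal → ℝ := fun t =>
  if t = ⊤ then 1 else sSup (g '' {q : ℚ | ((q : ℝ) : EReal) < t})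

section GregLemmas

variable {g : ℚ → ℝ} (hg0 : ∀ q, 0 ≤ g q) (hg1 : ∀ q, g q ≤ 1) (hmono : Monotone g)

include hg0 in
lemma Greg_nonneg (t : EReal) : 0 ≤ Greg g t := by
  unfold Greg
  split
  · norm_num
  · exact Real.sSup_nonneg (by rintro x ⟨q, -, rfl⟩; exact hg0 q)

include hg0 hg1 in
lemma Greg_le_one (t : EReal) : Greg g t ≤ 1 := by
  unfold Greg
  split
  · exact le_refl 1
  · exact Real.sSup_le (by rintro x ⟨q, -, rfl⟩; exact hg1 q) one_pos.le

include hg0 hg1 in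
lemma Greg_mono : Monotone (Greg g) := by
  intro t s hts
  by_cases hs : s = ⊤
  · subst hs
    simpa [Greg] using Greg_le_one hg0 hg1 t
  · have ht : t ≠ ⊤ := fun h => hs (top_le_iff.mp (h ▸ hts))
    simp only [Greg, if_neg hs, if_neg ht]
    refine Real.sSup_le ?_ (Real.sSup_nonneg (by rintro x ⟨q, -, rfl⟩; exact hg0 q))
    rintro x ⟨q, hq, rfl⟩
    exact le_csSup ⟨1, by rintro x ⟨q', -, rfl⟩; exact hg1 q'⟩ ⟨q, lt_of_lt_of_le hq hts, rfl⟩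

include hg1 in
lemma le_Greg {q : ℚ} {t : EReal} (h : ((q:ℝ):EReal) < t) : g q ≤ Greg g t := by
  unfold Greg
  split
  · exact hg1 q
  · exact le_csSup ⟨1, by rintro x ⟨q', -, rfl⟩; exact hg1 q'⟩ ⟨q, h, rfl⟩

include hg0 hmono in
lemma Greg_le {q : ℚ} : Greg g ((q:ℝ):EReal) ≤ g q := by
  unfold Greg
  rw [if_neg (by exact_mod_cast EReal.coe_ne_top _)]
  refine Real.sSup_le ?_ (hg0 q)
  rintro x ⟨q', hq', rfl⟩
  exact hmono (by exact_mod_cast (EReal.coe_lt_coe_iff.mp hq').le)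

lemma Greg_bot : Greg g ⊥ = 0 := by
  have : {q : ℚ | ((q : ℝ) : EReal) < (⊥ : EReal)} = ∅ := by
    ext q; simp
  simp [Greg, this, Real.sSup_empty]

lemma Greg_top : Greg g ⊤ = 1 := by simp [Greg]

include hg0 in
lemma Greg_zero (hneg : ∀ q ≤ 0, g q = 0) : Greg g (0 : EReal) = 0 := by
  unfold Greg
  rw [if_neg (by simp)]
  refine le_antisymm (Real.sSup_le ?_ le_rfl)
    (Real.sSup_nonneg (by rintro x ⟨q, -, rfl⟩; exact hg0 q))
  rintro x ⟨q, hq, rfl⟩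
  have : ((q:ℝ):EReal) < ((0:ℝ):EReal) := by simpa using hq
  exact (hneg q (by exact_mod_cast (EReal.coe_lt_coe_iff.mp this).le)).le

include hg0 hg1 in
lemma Greg_leftCont (x : ℝ) :
    ContinuousWithinAt (Greg g) (Set.Iio (x : EReal)) (x : EReal) := by
  rw [ContinuousWithinAt, Metric.tendsto_nhds]
  intro ε hε
  obtain ⟨q1, hq1⟩ := exists_rat_lt x
  have hne : (g '' {q : ℚ | ((q : ℝ) : EReal) < (x:EReal)}).Nonempty :=
    ⟨g q1, q1, by exact_mod_cast hq1, rfl⟩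
  have hGx : Greg g (x:EReal) = sSup (g '' {q : ℚ | ((q : ℝ) : EReal) < (x:EReal)}) := by
    rw [Greg, if_neg (by exact_mod_cast EReal.coe_ne_top x)]
  obtain ⟨y, ⟨q0, hq0, rfl⟩, hy⟩ :
      ∃ y ∈ g '' {q : ℚ | ((q : ℝ) : EReal) < (x:EReal)}, Greg g (x:EReal) - ε < y := by
    rw [hGx]
    exact exists_lt_of_lt_csSup hne (by linarith)
  have h1 : ∀ᶠ t in 𝓝[Set.Iio (x:EReal)] (x:EReal), t ∈ Set.Ioi ((q0:ℝ):EReal) :=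
    mem_nhdsWithin_of_mem_nhds (isOpen_Ioi.mem_nhds hq0)
  have h2 : ∀ᶠ t in 𝓝[Set.Iio (x:EReal)] (x:EReal), t ∈ Set.Iio (x:EReal) :=
    self_mem_nhdsWithin
  filter_upwards [h1, h2] with t ht1 ht2
  have hge : g q0 ≤ Greg g t := le_Greg hg1 ht1
  have hle : Greg g t ≤ Greg g (x:EReal) := Greg_mono hg0 hg1 ht2.le
  rw [Real.dist_eq, abs_lt]
  constructor <;> linarith

end GregLemmas

/-- `(Δ⁺, d_L)` is a compact metric space: every sequence in `Δ⁺` has a subsequence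
converging in the modified Lévy distance to an element of `Δ⁺`. -/
theorem stmt3 (F : ℕ → EReal → ℝ) (hF : ∀ n, IsDistFun (F n)) :
    ∃ (φ : ℕ → ℕ) (G : EReal → ℝ), StrictMono φ ∧ IsDistFun G ∧
      Tendsto (fun n => dL (F (φ n)) G) atTop (𝓝 0) := by
  have hcomp : IsSeqCompact (Set.pi Set.univ fun _ : ℚ => Set.Icc (0:ℝ) 1) :=
    (isCompact_univ_pi fun _ => isCompact_Icc).isSeqCompact
  obtain ⟨g, hgmem, φ, hφ, hconv⟩ :=
    hcomp (x := fun n (q : ℚ) => F n ((q:ℝ):EReal))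
      (fun n q _ => (hF n).2.1 _)
  have hpt : ∀ q : ℚ, Tendsto (fun n => F (φ n) ((q:ℝ):EReal)) atTop (𝓝 (g q)) :=
    fun q => (tendsto_pi_nhds.mp hconv) q
  have hg0 : ∀ q, 0 ≤ g q := fun q => (hgmem q (Set.mem_univ q)).1
  have hg1 : ∀ q, g q ≤ 1 := fun q => (hgmem q (Set.mem_univ q)).2
  have hmono : Monotone g := by
    intro q q' hqq
    refine le_of_tendsto_of_tendsto' (hpt q) (hpt q') fun n => ?_
    exact (hF (φ n)).1 (EReal.coe_le_coe_iff.mpr (by exact_mod_cast hqq))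
  have hneg : ∀ q ≤ 0, g q = 0 := by
    intro q hq
    have hz : ∀ n, F (φ n) ((q:ℝ):EReal) = 0 := by
      intro n
      have h1 : F (φ n) ((q:ℝ):EReal) ≤ F (φ n) (0:EReal) := by
        apply (hF (φ n)).1
        have h0 : ((q:ℝ):EReal) ≤ ((0:ℝ):EReal) := EReal.coe_le_coe_iff.mpr (by exact_mod_cast hq)
        simpa using h0
      have h2 := ((hF (φ n)).2.1 ((q:ℝ):EReal)).1
      have h3 := (hF (φ n)).2.2.2.2.2
      linarith [h3 ▸ h1]
    have hlim : Tendsto (fun n => F (φ n) ((q:ℝ):EReal)) atTop (𝓝 0) := by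
      simpa [hz] using (tendsto_const_nhds : Tendsto (fun _ : ℕ => (0:ℝ)) atTop (𝓝 0))
    exact tendsto_nhds_unique (hpt q) hlim
  have hdist : IsDistFun (Greg g) :=
    ⟨Greg_mono hg0 hg1, fun t => ⟨Greg_nonneg hg0 t, Greg_le_one hg0 hg1 t⟩,
      Greg_leftCont hg0 hg1, Greg_bot, Greg_top, Greg_zero hg0 hneg⟩
  -- key eventual estimate
  have key : ∀ ε : ℝ, 0 < ε → ε ≤ 1 →
      ∀ᶠ n in atTop, ε ∈ levySet (F (φ n)) (Greg g) := by
    intro ε hε hε1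
    obtain ⟨δ, hδ0, hδε⟩ : ∃ δ : ℚ, 0 < (δ:ℝ) ∧ (δ:ℝ) < ε/2 := by
      obtain ⟨δ, h1, h2⟩ := exists_rat_btwn (half_pos hε)
      exact ⟨δ, h1, h2⟩
    obtain ⟨K, hK⟩ := exists_nat_gt ((1/ε) / (δ:ℝ))
    have hev : ∀ᶠ n in atTop, ∀ i ∈ Finset.range (K+1),
        |F (φ n) (((i * δ : ℚ) : ℝ) : EReal) - g (i * δ)| < ε/2 := by
      rw [Filter.eventually_all_finset]
      intro i _
      have := Metric.tendsto_nhds.mp (hpt (i * δ)) (ε/2) (half_pos hε)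
      simpa [Real.dist_eq] using this
    filter_upwards [hev] with n hn
    have main : ∀ t : ℝ, 0 < t → t < 1/ε →
        (Greg g (t:EReal) ≤ F (φ n) ((t+ε : ℝ):EReal) + ε) ∧
        (F (φ n) (t:EReal) ≤ Greg g ((t+ε : ℝ):EReal) + ε) := by
      intro t ht0 ht1
      set i := ⌈t / (δ:ℝ)⌉₊ with hidef
      have hiK : i ≤ K := by
        apply Nat.ceil_le.mpr
        have hx : t / (δ:ℝ) < (1/ε) / (δ:ℝ) := by gcongr
        linarith
      have hle : t ≤ (i:ℝ) * (δ:ℝ) := by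
        have := Nat.le_ceil (t / (δ:ℝ))
        calc t = t / (δ:ℝ) * (δ:ℝ) := by field_simp
          _ ≤ (i:ℝ) * (δ:ℝ) := by apply mul_le_mul_of_nonneg_right this hδ0.le
      have hlt : (i:ℝ) * (δ:ℝ) < t + ε/2 := by
        have h1 : (i:ℝ) < t/(δ:ℝ) + 1 := Nat.ceil_lt_add_one (by positivity)
        have h2 : (i:ℝ) * (δ:ℝ) < (t/(δ:ℝ) + 1) * (δ:ℝ) :=
          mul_lt_mul_of_pos_right h1 hδ0
        have h3 : (t/(δ:ℝ) + 1) * (δ:ℝ) = t + (δ:ℝ) := by field_simp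
        linarith
      have hmemi : i ∈ Finset.range (K+1) := Finset.mem_range.mpr (Nat.lt_succ_of_le hiK)
      have hclose := hn i hmemi
      have hrr : (((i : ℚ) * δ : ℚ) : ℝ) = (i:ℝ) * (δ:ℝ) := by push_cast; ring
      have habs := abs_lt.mp hclose
      constructor
      · have e1 : Greg g (t:EReal) ≤ Greg g ((((i : ℚ) * δ : ℚ):ℝ):EReal) :=
          Greg_mono hg0 hg1 (EReal.coe_le_coe_iff.mpr (by rw [hrr]; exact hle))
        have e2 : Greg g ((((i : ℚ) * δ : ℚ):ℝ):EReal) ≤ g ((i : ℚ) * δ) :=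
          Greg_le hg0 hmono
        have e4 : F (φ n) ((((i : ℚ) * δ : ℚ):ℝ):EReal) ≤ F (φ n) ((t+ε:ℝ):EReal) := by
          apply (hF (φ n)).1
          apply EReal.coe_le_coe_iff.mpr
          rw [hrr]; linarith
        linarith [habs.1]
      · have e1 : F (φ n) (t:EReal) ≤ F (φ n) ((((i : ℚ) * δ : ℚ):ℝ):EReal) := by
          apply (hF (φ n)).1
          apply EReal.coe_le_coe_iff.mpr
          rw [hrr]; exact hle
        have e3 : g ((i : ℚ) * δ) ≤ Greg g ((t+ε:ℝ):EReal) := by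
          apply le_Greg hg1
          apply EReal.coe_lt_coe_iff.mpr
          rw [hrr]; linarith
        linarith [habs.2]
    exact ⟨hε, hε1, fun t ht0 ht1 => (main t ht0 ht1).1, fun t ht0 ht1 => (main t ht0 ht1).2⟩
  refine ⟨φ, Greg g, hφ, hdist, ?_⟩
  have hone : ∀ n, (1:ℝ) ∈ levySet (F n) (Greg g) := by
    intro n
    refine ⟨one_pos, le_rfl, ?_, ?_⟩
    · intro t ht0 ht1
      have h1 := Greg_le_one hg0 hg1 (t:EReal)
      have h2 := ((hF n).2.1 ((t+1:ℝ):EReal)).1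
      linarith
    · intro t ht0 ht1
      have h1 := ((hF n).2.1 (t:EReal)).2
      have h2 := Greg_nonneg hg0 ((t+1:ℝ):EReal)
      linarith
  have hbdd : ∀ n, BddBelow (levySet (F n) (Greg g)) :=
    fun n => ⟨0, fun h hh => hh.1.le⟩
  have hnn : ∀ n, 0 ≤ dL (F n) (Greg g) :=
    fun n => le_csInf ⟨1, hone n⟩ (fun h hh => hh.1.le)
  rw [Metric.tendsto_atTop]
  intro ε hε
  have hε' : 0 < min (ε/2) 1 := lt_min (half_pos hε) one_pos
  obtain ⟨N, hN⟩ := Filter.eventually_atTop.mp (key _ hε' (min_le_right _ _))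
  refine ⟨N, fun n hn => ?_⟩
  have h1 : dL (F (φ n)) (Greg g) ≤ min (ε/2) 1 := csInf_le (hbdd _) (hN n hn)
  have h2 : min (ε/2) 1 ≤ ε/2 := min_le_left _ _
  rw [Real.dist_eq, sub_zero, abs_of_nonneg (hnn _)]
  linarith
end
end

section
/- For a sequence (F_n) in Δ⁺ and F ∈ Δ⁺, the sequence (F_n) converges weakly to F (i.e., F_n(t) → F(t) at every continuity point t of F) if and only if d_L(F_n, F) → 0, where d_L is the modified Lévy distance. -/
open Filter Topology

noncomputable section

lemma one_mem_levySet (F G : EReal → ℝ) (hF : IsDistFun F) (hG : IsDistFun G) :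
    (1:ℝ) ∈ levySet F G := by
  refine ⟨one_pos, le_refl _, ?_, ?_⟩
  · intro t ht ht'
    have h1 := (hG.2.1 (t:EReal)).2
    have h2 := (hF.2.1 ((t+1:ℝ):EReal)).1
    linarith
  · intro t ht ht'
    have h1 := (hF.2.1 (t:EReal)).2
    have h2 := (hG.2.1 ((t+1:ℝ):EReal)).1
    linarith

lemma levySet_bddBelow (F G : EReal → ℝ) : BddBelow (levySet F G) :=
  ⟨0, fun h hh => hh.1.le⟩

lemma dL_nonneg (F G : EReal → ℝ) (hF : IsDistFun F) (hG : IsDistFun G) :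
    0 ≤ dL F G :=
  le_csInf ⟨1, one_mem_levySet F G hF hG⟩ fun b hb => hb.1.le

lemma eventually_levy (F : ℕ → EReal → ℝ) (G : EReal → ℝ)
    (hF : ∀ n, IsDistFun (F n)) (hG : IsDistFun G) (hw : WeakConv F G)
    {ε : ℝ} (hε : 0 < ε) (hε1 : ε ≤ 1) :
    ∀ᶠ n in atTop, ε ∈ levySet (F n) G := by
  classical
  have hcnt : Set.Countable {x : ℝ | ¬ ContinuousAt G (x:EReal)} := by
    have h1 : Set.Countable {y : EReal | ¬ ContinuousAt G y} := hG.1.countable_not_continuousAt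
    have he : {x : ℝ | ¬ ContinuousAt G (x:EReal)}
        = ((↑) : ℝ → EReal) ⁻¹' {y | ¬ ContinuousAt G y} := rfl
    rw [he]
    exact h1.preimage EReal.coe_injective
  have hdense : Dense {x : ℝ | ContinuousAt G (x:EReal)} := by
    have hd := hcnt.dense_compl ℝ
    have he : {x : ℝ | ¬ ContinuousAt G (x:EReal)}ᶜ = {x : ℝ | ContinuousAt G (x:EReal)} := by
      ext x; simp
    rwa [he] at hd
  have hpt : ∀ j : ℕ, ∃ y : ℝ, ContinuousAt G (y:EReal) ∧
      (j:ℝ)*ε/4 < y ∧ y < (j:ℝ)*ε/4 + ε/4 := by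
    intro j
    obtain ⟨y, hy1, hy2⟩ := hdense.exists_between
      (show (j:ℝ)*ε/4 < (j:ℝ)*ε/4 + ε/4 by linarith)
    exact ⟨y, hy1, hy2.1, hy2.2⟩
  choose x hxc hxl hxu using hpt
  obtain ⟨M, hM⟩ := exists_nat_ge (4/(ε*ε))
  have hMx : (1:ℝ)/ε < x M := by
    have h1 := hxl M
    have h2 : (4/(ε*ε)) * ε / 4 ≤ (M:ℝ) * ε / 4 := by
      have := mul_le_mul_of_nonneg_right hM hε.le
      linarith
    have h3 : (4/(ε*ε)) * ε / 4 = 1/ε := by field_simp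
    linarith
  have hev : ∀ᶠ n in atTop, ∀ j ∈ Finset.range (M+1),
      |F n ((x j : ℝ):EReal) - G ((x j : ℝ):EReal)| < ε/2 := by
    rw [Filter.eventually_all_finset]
    intro j _
    have ht := hw (x j) (hxc j)
    filter_upwards [ht (Metric.ball_mem_nhds _ (half_pos hε))] with n hn
    simpa [Real.dist_eq] using hn
  filter_upwards [hev] with n hn
  have grid : ∀ t : ℝ, 0 < t → t < 1/ε → ∃ j ≤ M, t ≤ x j ∧ x j ≤ t + ε := by
    intro t ht ht'
    have hex : ∃ j, t < x j := ⟨M, ht'.trans hMx⟩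
    have hfind : t < x (Nat.find hex) := Nat.find_spec hex
    have hjM : Nat.find hex ≤ M := Nat.find_le (ht'.trans hMx)
    refine ⟨Nat.find hex, hjM, hfind.le, ?_⟩
    rcases Nat.eq_zero_or_pos (Nat.find hex) with h0 | hpos
    · rw [h0]
      have h1 := hxu 0
      norm_num at h1
      linarith
    · have hm : ¬ t < x (Nat.find hex - 1) :=
        Nat.find_min hex (Nat.sub_lt hpos one_pos)
      push_neg at hm
      have h1 := hxu (Nat.find hex)
      have h2 := hxl (Nat.find hex - 1)
      have hc : ((Nat.find hex - 1 : ℕ) : ℝ) = ((Nat.find hex : ℕ):ℝ) - 1 := by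
        rw [Nat.cast_sub hpos]; simp
      rw [hc] at h2
      linarith
  refine ⟨hε, hε1, ?_, ?_⟩
  · intro t ht ht'
    obtain ⟨j, hjM, htj, hjt⟩ := grid t ht ht'
    have habs := abs_lt.1 (hn j (Finset.mem_range.2 (Nat.lt_succ_of_le hjM)))
    have h1 : G (t:EReal) ≤ G ((x j : ℝ):EReal) := hG.1 (by exact_mod_cast htj)
    have h2 : F n ((x j : ℝ):EReal) ≤ F n ((t+ε:ℝ):EReal) := (hF n).1 (by exact_mod_cast hjt)
    linarith [habs.1, habs.2]
  · intro t ht ht'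
    obtain ⟨j, hjM, htj, hjt⟩ := grid t ht ht'
    have habs := abs_lt.1 (hn j (Finset.mem_range.2 (Nat.lt_succ_of_le hjM)))
    have h1 : F n (t:EReal) ≤ F n ((x j : ℝ):EReal) := (hF n).1 (by exact_mod_cast htj)
    have h2 : G ((x j : ℝ):EReal) ≤ G ((t+ε:ℝ):EReal) := hG.1 (by exact_mod_cast hjt)
    linarith [habs.1, habs.2]

/-- Weak convergence in `Δ⁺` coincides with convergence in the modified Lévy distance. -/
theorem stmt4 (F : ℕ → EReal → ℝ) (G : EReal → ℝ)
    (hF : ∀ n, IsDistFun (F n)) (hG : IsDistFun G) :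
    WeakConv F G ↔ Tendsto (fun n => dL (F n) G) atTop (𝓝 0) := by
  constructor
  · intro hw
    rw [NormedAddCommGroup.tendsto_nhds_zero]
    intro ε hε
    have h1 : (0:ℝ) < min (ε/2) 1 := lt_min (half_pos hε) one_pos
    filter_upwards [eventually_levy F G hF hG hw h1 (min_le_right _ _)] with n hn
    have hle : dL (F n) G ≤ min (ε/2) 1 := csInf_le (levySet_bddBelow _ _) hn
    have h0 : 0 ≤ dL (F n) G := dL_nonneg _ _ (hF n) hG
    rw [Real.norm_eq_abs, abs_of_nonneg h0]
    calc dL (F n) G ≤ min (ε/2) 1 := hle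
      _ ≤ ε/2 := min_le_left _ _
      _ < ε := half_lt_self hε
  · intro hd t hcont
    by_cases ht : t ≤ 0
    · have hG0 : G ((0:ℝ):EReal) = 0 := by
        rw [EReal.coe_zero]; exact hG.2.2.2.2.2
      have hGt : G (t:EReal) = 0 :=
        le_antisymm (by
          have := hG.1 (show (t:EReal) ≤ ((0:ℝ):EReal) by exact_mod_cast ht)
          rw [hG0] at this; exact this) (hG.2.1 _).1
      have hFt : ∀ n, F n (t:EReal) = 0 := by
        intro n
        have hF0 : F n ((0:ℝ):EReal) = 0 := by
          rw [EReal.coe_zero]; exact (hF n).2.2.2.2.2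
        exact le_antisymm (by
          have := (hF n).1 (show (t:EReal) ≤ ((0:ℝ):EReal) by exact_mod_cast ht)
          rw [hF0] at this; exact this) ((hF n).2.1 _).1
      rw [hGt]
      simpa [hFt] using (tendsto_const_nhds : Tendsto (fun _ : ℕ => (0:ℝ)) atTop (𝓝 0))
    · push_neg at ht
      have hcR : ContinuousAt (fun s : ℝ => G (s:EReal)) t :=
        hcont.comp continuous_coe_real_ereal.continuousAt
      rw [Metric.tendsto_atTop]
      intro ε hε
      obtain ⟨δ, hδ, hδ'⟩ := Metric.continuousAt_iff.1 hcR (ε/3) (by positivity)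
      have hηpos : 0 < min (min (ε/3) δ) (min t (1/t)) :=
        lt_min (lt_min (by positivity) hδ) (lt_min ht (by positivity))
      obtain ⟨N, hN⟩ := Metric.tendsto_atTop.1 hd _ hηpos
      refine ⟨N, fun n hn => ?_⟩
      have hdn : dL (F n) G < min (min (ε/3) δ) (min t (1/t)) := by
        have h2 := hN n hn
        rwa [Real.dist_eq, sub_zero, abs_of_nonneg (dL_nonneg _ _ (hF n) hG)] at h2
      obtain ⟨h, hhmem, hhη⟩ :=
        exists_lt_of_csInf_lt ⟨1, one_mem_levySet _ _ (hF n) hG⟩ hdn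
      obtain ⟨hh0, hh1, hc1, hc2⟩ := hhmem
      have hht : h < t := hhη.trans_le ((min_le_right _ _).trans (min_le_left _ _))
      have hhδ : h < δ := hhη.trans_le ((min_le_left _ _).trans (min_le_right _ _))
      have hhε : h < ε/3 := hhη.trans_le ((min_le_left _ _).trans (min_le_left _ _))
      have hhinv : h < 1/t := hhη.trans_le ((min_le_right _ _).trans (min_le_right _ _))
      have hinv : t < 1/h := by
        rw [lt_div_iff₀ hh0]
        rw [lt_div_iff₀ ht] at hhinv
        nlinarith
      have up : F n (t:EReal) ≤ G ((t+h:ℝ):EReal) + h := hc2 t ht hinv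
      have hGclose1 : |G ((t+h:ℝ):EReal) - G (t:EReal)| < ε/3 := by
        have := hδ' (show dist (t+h) t < δ by
          rw [Real.dist_eq]
          have : |t + h - t| = h := by rw [abs_of_nonneg (by linarith)]; ring
          rw [this]; exact hhδ)
        rwa [Real.dist_eq] at this
      have ht1 : 0 < t - h := by linarith
      have ht2 : t - h < 1/h := by linarith
      have low : G ((t-h:ℝ):EReal) ≤ F n ((t-h+h:ℝ):EReal) + h := hc1 (t-h) ht1 ht2
      have heq : ((t-h+h:ℝ):EReal) = (t:EReal) := by norm_num
      rw [heq] at low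
      have hGclose2 : |G ((t-h:ℝ):EReal) - G (t:EReal)| < ε/3 := by
        have := hδ' (show dist (t-h) t < δ by
          rw [Real.dist_eq]
          have : |t - h - t| = h := by rw [abs_sub_comm, abs_of_nonneg (by linarith)]; ring
          rw [this]; exact hhδ)
        rwa [Real.dist_eq] at this
      rw [Real.dist_eq, abs_lt]
      have e1 := abs_lt.1 hGclose1
      have e2 := abs_lt.1 hGclose2
      constructor <;> linarith [e1.1, e1.2, e2.1, e2.2]
end
end

section
/- Let (G,d) be a metric space, ⋆ a triangle function on Δ⁺ with H_a ⋆ H_b = H_{a+b} for all a,b ≥ 0, and D(p,q)=H_{d(p,q)} the induced probabilistic metric. For a map L : G → [0,∞), the function L is 1-Lipschitz (|L(x)-L(y)| ≤ d(x,y)) if and only if the map f : G → Δ⁺ defined by f(x) = H_{L(x)} is a probabilistic 1-Lipschitz map, i.e., D(x,y) ⋆ f(y) ≤ f(x) for all x,y ∈ G. -/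
open Filter Topology

noncomputable section

lemma hstep_le_hstep (a b : ℝ) : Hstep a ≤ Hstep b ↔ b ≤ a := by
  constructor
  · intro h
    by_contra hba
    push_neg at hba
    have := h (b : EReal)
    simp [Hstep, not_le.2 (EReal.coe_lt_coe_iff.2 hba)] at this
    linarith
  · intro h t
    unfold Hstep
    split_ifs with h1 h2 h3 <;> try norm_num
    exact h1 (h3.trans (EReal.coe_le_coe_iff.2 h))

/-- `L : G → [0,∞)` is 1-Lipschitz iff `x ↦ H_{L(x)}` is probabilistic 1-Lipschitz
for the induced probabilistic metric `D(p,q) = H_{d(p,q)}`. -/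
theorem stmt8 {G : Type} [MetricSpace G] (star : TriOp) (hstar : IsTriangleFn star)
    (hH : ∀ a b : ℝ, 0 ≤ a → 0 ≤ b → star (Hstep a) (Hstep b) = Hstep (a + b))
    (L : G → ℝ) (hL : ∀ x, 0 ≤ L x) :
    (∀ x y, |L x - L y| ≤ dist x y) ↔
    (∀ x y, star (Hstep (dist x y)) (Hstep (L y)) ≤ Hstep (L x)) := by
  have key : ∀ x y : G, star (Hstep (dist x y)) (Hstep (L y)) = Hstep (dist x y + L y) :=
    fun x y => hH _ _ dist_nonneg (hL y)
  constructor
  · intro h x y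
    rw [key, hstep_le_hstep]
    have := (abs_sub_le_iff.1 (h x y)).1
    linarith
  · intro h x y
    rw [abs_sub_le_iff]
    have h1 := (hstep_le_hstep _ _).1 ((key x y) ▸ h x y)
    have h2 := (hstep_le_hstep _ _).1 ((key y x) ▸ h y x)
    rw [dist_comm y x] at h2
    constructor <;> linarith
end
end

section
/- Let (G,D,⋆) be a probabilistic metric space with ⋆ continuous (with respect to weak convergence on Δ⁺). Then every probabilistic 1-Lipschitz map f : G → Δ⁺ is probabilistically continuous: whenever D(z_n, z) converges weakly to H₀, f(z_n) converges weakly to f(z). -/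
open Filter Topology

noncomputable section

/-!
By Helly's selection theorem every subsequence of `f (z n)` has a further subsequence
converging weakly to some `K ∈ Δ⁺`. Continuity of `⋆` sends `D(z n, z) ⋆ f z` to
`H₀ ⋆ f z = f z` and `D(z n, z) ⋆ f (z n)` to `H₀ ⋆ K = K`, so the Lipschitz inequalities
`D(z n, z) ⋆ f z ≤ f (z n)` and `D(z, z n) ⋆ f (z n) ≤ f z` give `f z = K` at every common
continuity point. These are dense, and left-continuity forces `K = f z`.
-/

open Set

lemma isDistFun_H0 : IsDistFun H0 := by
  refine ⟨fun a b hab => ?_, fun t => ?_, fun x => ?_, by simp [H0, Hstep], by simp [H0, Hstep],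
    by simp [H0, Hstep]⟩
  · simp only [H0, Hstep]
    split_ifs <;> norm_num
    exact ‹¬a ≤ _› (hab.trans ‹b ≤ _›)
  · simp only [H0, Hstep]; split_ifs <;> norm_num
  · rcases le_or_gt x 0 with hx | hx
    · refine continuousWithinAt_const.congr (fun y hy => ?_) (if_pos (by exact_mod_cast hx))
      exact if_pos ((mem_Iio.1 hy).le.trans (by exact_mod_cast hx))
    · have h1 : ContinuousAt (fun _ : EReal => (1 : ℝ)) x := continuousAt_const
      refine (h1.congr ?_).continuousWithinAt
      filter_upwards [Ioi_mem_nhds (show ((0 : ℝ) : EReal) < x by exact_mod_cast hx)] with y hy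
      exact (if_neg (not_le.2 hy)).symm

lemma IsTriangleFn.H0_star {star : TriOp} (h : IsTriangleFn star) {L : EReal → ℝ}
    (hL : IsDistFun L) : star H0 L = L := by
  rw [h.2.1 H0 L isDistFun_H0 hL, h.2.2.2.1 L hL]

lemma weakConv_of_forall_subseq {Fn : ℕ → EReal → ℝ} {F : EReal → ℝ}
    (h : ∀ ns : ℕ → ℕ, Tendsto ns atTop atTop →
      ∃ φ : ℕ → ℕ, WeakConv (fun k => Fn (ns (φ k))) F) :
    WeakConv Fn F := fun t ht =>
  tendsto_of_subseq_tendsto fun ns hns => (h ns hns).imp fun _ hφ => hφ t ht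

namespace IsDistFun

variable {F G : EReal → ℝ}

lemma monotone_coe (hF : IsDistFun F) : Monotone fun s : ℝ => F s :=
  fun _ _ h => hF.1 (EReal.coe_le_coe_iff.2 h)

lemma countable_not_continuousAt (hF : IsDistFun F) :
    {s : ℝ | ¬ ContinuousAt F s}.Countable :=
  hF.monotone_coe.countable_not_continuousAt.mono fun _ hs hcont =>
    hs (EReal.isOpenEmbedding_coe.continuousAt_iff.1 hcont)

lemma continuousWithinAt_coe_Iio (hF : IsDistFun F) (x : ℝ) :
    ContinuousWithinAt (fun s : ℝ => F s) (Iio x) x :=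
  (hF.2.2.1 x).comp continuous_coe_real_ereal.continuousWithinAt
    fun _ hs => EReal.coe_lt_coe_iff.2 hs

lemma eq_of_forall_continuousAt (hF : IsDistFun F) (hG : IsDistFun G)
    (h : ∀ s : ℝ, ContinuousAt F s → ContinuousAt G s → F s = G s) : F = G := by
  set D := {s : ℝ | ContinuousAt F s ∧ ContinuousAt G s}
  have hD : Dense D := by
    have hDc : Dᶜ.Countable :=
      (hF.countable_not_continuousAt.union hG.countable_not_continuousAt).mono
        fun _ hs => not_and_or.1 hs
    simpa using hDc.dense_compl ℝ
  funext x
  induction x using EReal.rec with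
  | bot => rw [hF.2.2.2.1, hG.2.2.2.1]
  | top => rw [hF.2.2.2.2.1, hG.2.2.2.2.1]
  | coe x =>
    have hx : x ∈ closure (Iio x ∩ D) :=
      closure_minimal (hD.open_subset_closure_inter isOpen_Iio) isClosed_closure
        (by rw [closure_Iio]; exact mem_Iic.2 le_rfl)
    have := mem_closure_iff_nhdsWithin_neBot.1 hx
    have hFG : (fun s : ℝ => F s) =ᶠ[𝓝[Iio x ∩ D] x] fun s => G s := by
      filter_upwards [self_mem_nhdsWithin] with s hs using h s hs.2.1 hs.2.2
    exact tendsto_nhds_unique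
      (((hF.continuousWithinAt_coe_Iio x).mono inter_subset_left).congr' hFG)
      ((hG.continuousWithinAt_coe_Iio x).mono inter_subset_left)

end IsDistFun

lemma exists_strictMono_tendsto_of_mem_Icc {ι : Type*} [Countable ι] {a b : ℝ}
    (u : ℕ → ι → ℝ) (hu : ∀ n i, u n i ∈ Icc a b) :
    ∃ φ : ℕ → ℕ, StrictMono φ ∧ ∃ g : ι → ℝ, ∀ i,
      Tendsto (fun n => u (φ n) i) atTop (𝓝 (g i)) := by
  obtain ⟨g, φ, hφ, hconv⟩ :=
    CompactSpace.tendsto_subseq fun n i => (⟨u n i, hu n i⟩ : Icc a b)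
  exact ⟨φ, hφ, fun i => g i, fun i =>
    (continuous_subtype_val.tendsto _).comp (tendsto_pi_nhds.1 hconv i)⟩

-- Mass escaping to `+∞` is put at `⊤`.
def hellyLimit (g : ℚ → ℝ) (x : EReal) : ℝ :=
  if x = ⊤ then 1 else sSup (g '' {q : ℚ | ((q : ℝ) : EReal) < x})

section hellyLimit

variable {g : ℚ → ℝ}

lemma le_hellyLimit (hg : ∀ q, g q ≤ 1) {q : ℚ} {x : EReal} (hqx : ((q : ℝ) : EReal) < x) :
    g q ≤ hellyLimit g x := by
  unfold hellyLimit
  split_ifs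
  · exact hg q
  · exact le_csSup ⟨1, by rintro _ ⟨p, -, rfl⟩; exact hg p⟩ ⟨q, hqx, rfl⟩

lemma hellyLimit_le {x : EReal} (hx : x ≠ ⊤) {c : ℝ} (hc : 0 ≤ c)
    (h : ∀ q : ℚ, ((q : ℝ) : EReal) < x → g q ≤ c) : hellyLimit g x ≤ c := by
  rw [hellyLimit, if_neg hx]
  exact Real.sSup_le (by rintro _ ⟨q, hq, rfl⟩; exact h q hq) hc

lemma hellyLimit_nonneg (hg : ∀ q, 0 ≤ g q) (x : EReal) : 0 ≤ hellyLimit g x := by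
  unfold hellyLimit
  split_ifs
  · exact zero_le_one
  · exact Real.sSup_nonneg (by rintro _ ⟨q, -, rfl⟩; exact hg q)

lemma exists_lt_of_lt_hellyLimit {x : ℝ} {a : ℝ} (ha : a < hellyLimit g x) :
    ∃ q : ℚ, (q : ℝ) < x ∧ a < g q := by
  rw [hellyLimit, if_neg (EReal.coe_ne_top x)] at ha
  obtain ⟨q, hqx⟩ := exists_rat_lt x
  have hne : (g '' {p : ℚ | ((p : ℝ) : EReal) < x}).Nonempty :=
    ⟨g q, q, EReal.coe_lt_coe_iff.2 hqx, rfl⟩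
  obtain ⟨_, ⟨p, hpx, rfl⟩, hap⟩ := exists_lt_of_lt_csSup hne ha
  exact ⟨p, EReal.coe_lt_coe_iff.1 hpx, hap⟩

lemma hellyLimit_le_one (hg : ∀ q, g q ≤ 1) (x : EReal) : hellyLimit g x ≤ 1 := by
  by_cases hx : x = ⊤
  · rw [hellyLimit, if_pos hx]
  · exact hellyLimit_le hx zero_le_one fun q _ => hg q

lemma isDistFun_hellyLimit (hg : ∀ q, g q ∈ Icc (0 : ℝ) 1)
    (hg_neg : ∀ q : ℚ, q < 0 → g q ≤ 0) :
    IsDistFun (hellyLimit g) := by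
  have hle : ∀ q, g q ≤ 1 := fun q => (hg q).2
  have hnonneg := hellyLimit_nonneg fun q => (hg q).1
  have hmono : Monotone (hellyLimit g) := by
    intro x y hxy
    by_cases hy : y = ⊤
    · exact (hellyLimit_le_one hle x).trans_eq (if_pos hy).symm
    · exact hellyLimit_le (ne_top_of_le_ne_top hy hxy) (hnonneg y)
        fun q hq => le_hellyLimit hle (hq.trans_le hxy)
  refine ⟨hmono, fun x => ⟨hnonneg x, hellyLimit_le_one hle x⟩, fun x => ?_, ?_, if_pos rfl,
    ?_⟩
  · refine tendsto_order.2 ⟨fun a ha => ?_, fun a ha => ?_⟩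
    · obtain ⟨q, hqx, haq⟩ := exists_lt_of_lt_hellyLimit ha
      filter_upwards [nhdsWithin_le_nhds (Ioi_mem_nhds (EReal.coe_lt_coe_iff.2 hqx))] with y hy
      exact haq.trans_le (le_hellyLimit hle hy)
    · filter_upwards [self_mem_nhdsWithin] with y hy
      exact (hmono hy.le).trans_lt ha
  · exact le_antisymm (hellyLimit_le (by simp) le_rfl fun _ hq => absurd hq not_lt_bot)
      (hnonneg ⊥)
  · exact le_antisymm (hellyLimit_le EReal.zero_ne_top le_rfl fun q hq =>
      hg_neg q (by exact_mod_cast hq)) (hnonneg 0)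

lemma weakConv_hellyLimit {Fn : ℕ → EReal → ℝ} (hFn : ∀ n, Monotone (Fn n))
    (hg : ∀ q, g q ≤ 1) (hlim : ∀ q : ℚ, Tendsto (fun n => Fn n (q : ℝ)) atTop (𝓝 (g q))) :
    WeakConv Fn (hellyLimit g) := by
  intro t ht
  refine tendsto_order.2 ⟨fun a ha => ?_, fun a ha => ?_⟩
  · obtain ⟨q, hqt, haq⟩ := exists_lt_of_lt_hellyLimit ha
    filter_upwards [(tendsto_order.1 (hlim q)).1 a haq] with n hn
    exact hn.trans_le (hFn n (EReal.coe_le_coe_iff.2 hqt.le))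
  · have hright : ∀ᶠ s : ℝ in 𝓝[>] t, hellyLimit g s < a := nhdsWithin_le_nhds <|
      (tendsto_order.1 (ht.comp continuous_coe_real_ereal.continuousAt)).2 a ha
    obtain ⟨s, hsa, hts⟩ := (hright.and self_mem_nhdsWithin).exists
    obtain ⟨q, htq, hqs⟩ := exists_rat_btwn hts
    filter_upwards [(tendsto_order.1 (hlim q)).2 a
      ((le_hellyLimit hg (EReal.coe_lt_coe_iff.2 hqs)).trans_lt hsa)] with n hn
    exact (hFn n (EReal.coe_le_coe_iff.2 htq.le)).trans_lt hn

end hellyLimit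

theorem IsDistFun.exists_strictMono_weakConv (Fn : ℕ → EReal → ℝ)
    (hFn : ∀ n, IsDistFun (Fn n)) :
    ∃ φ : ℕ → ℕ, StrictMono φ ∧ ∃ K, IsDistFun K ∧ WeakConv (fun n => Fn (φ n)) K := by
  obtain ⟨φ, hφ, g, hg⟩ := exists_strictMono_tendsto_of_mem_Icc
    (fun n (q : ℚ) => Fn n ((q : ℝ) : EReal)) fun n q => (hFn n).2.1 _
  have hg_mem : ∀ q, g q ∈ Icc (0 : ℝ) 1 := fun q =>
    isClosed_Icc.mem_of_tendsto (hg q) (Eventually.of_forall fun n => (hFn _).2.1 _)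
  have hg_neg : ∀ q : ℚ, q < 0 → g q ≤ 0 := fun q hq =>
    le_of_tendsto' (hg q) fun n =>
      ((hFn _).1 (by exact_mod_cast hq.le)).trans_eq (hFn _).2.2.2.2.2
  exact ⟨φ, hφ, hellyLimit g, isDistFun_hellyLimit hg_mem hg_neg,
    weakConv_hellyLimit (fun n => (hFn _).1) (fun q => (hg_mem q).2) hg⟩

lemma PLip.eq_of_weakConv {G : Type} {M : PMSpace G} {f : G → EReal → ℝ} (hf : PLip M f)
    (hc : StarContinuous M.star) {z : G} {zn : ℕ → G}
    (hz : WeakConv (fun n => M.D (zn n) z) H0) {K : EReal → ℝ} (hK : IsDistFun K)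
    (hfK : WeakConv (fun n => f (zn n)) K) : K = f z := by
  have hD : ∀ n, IsDistFun (M.D (zn n) z) := fun n => M.D_mem _ _
  have hstar_fz : WeakConv (fun n => M.star (M.D (zn n) z) (f z)) (f z) := by
    simpa only [M.star_tri.H0_star (hf.1 z)] using
      hc _ _ _ _ hD (fun _ => hf.1 z) isDistFun_H0 (hf.1 z) hz fun _ _ => tendsto_const_nhds
  have hstar_fzn : WeakConv (fun n => M.star (M.D (zn n) z) (f (zn n))) K := by
    simpa only [M.star_tri.H0_star hK] using
      hc _ _ _ _ hD (fun _ => hf.1 _) isDistFun_H0 hK hz hfK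
  refine hK.eq_of_forall_continuousAt (hf.1 z) fun s hKs hfs => le_antisymm ?_ ?_
  · refine le_of_tendsto_of_tendsto' (hstar_fzn s hKs) tendsto_const_nhds fun n => ?_
    simpa only [M.D_symm z (zn n)] using hf.2 z (zn n) s
  · exact le_of_tendsto_of_tendsto' (hstar_fz s hfs) (hfK s hKs) fun n => hf.2 (zn n) z s

/-- If `⋆` is continuous, every probabilistic 1-Lipschitz map is probabilistically
continuous. -/
theorem stmt10 {G : Type} (M : PMSpace G) (hc : StarContinuous M.star)
    (f : G → EReal → ℝ) (hf : PLip M f) : PCont M f := by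
  refine ⟨hf.1, fun z zn hz => weakConv_of_forall_subseq fun ns hns => ?_⟩
  obtain ⟨φ, hφ, K, hK, hfK⟩ :=
    IsDistFun.exists_strictMono_weakConv (fun n => f (zn (ns n))) fun n => hf.1 _
  have hzφ : WeakConv (fun k => M.D (zn (ns (φ k))) z) H0 := fun t ht =>
    (hz t ht).comp (hns.comp hφ.tendsto_atTop)
  exact ⟨φ, hf.eq_of_weakConv hc hzφ hK hfK ▸ hfK⟩
end
end
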